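/- arXiv:1501.03628 — 4 statements merged into one kernel-verified Lean document; each statement's English description precedes it below -/
import Mathlib

section
/- Let I be a finite set of cells with water heights h : I → ℝ satisfying h i ≥ 0 for all i, and let Δx > 0 and Δt > 0 be real numbers. Let E be a finite set of edges together with maps a, b : E → I with a e ≠ b e for every edge e, and a flux function F : E → ℝ; define the signed flux of edge e with respect to cell i by F_i(e) = F e if i = a e, F_i(e) = −F e if i = b e, and F_i(e) = 0 otherwise. Define the outflow of cell i by O i = Σ_{e ∈ E} max(F_i(e), 0). Suppose Δt_E : E → ℝ satisfies 0 ≤ Δt_E e ≤ Δt for every edge e, and for every edge e and every cell i with F_i(e) > 0 one has Δt_E e · O i ≤ Δx · h i (i.e. the edge time step does not exceed the draining time Δx·h i / O i of the upwind cell). Then for every cell i the updated water height h i − (1/Δx) · Σ_{e ∈ E} Δt_E e · F_i(e) is nonnegative. -/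
open Finset

/-- The total weight `∑ w` is a common denominator: multiplying the bound by it, each term with
`w i > 0` is controlled by the hypothesis, and the terms with `w i = 0` vanish. -/
theorem Finset.sum_mul_le_of_forall_mul_sum_le {ι 𝕜 : Type*} [Field 𝕜] [LinearOrder 𝕜]
    [IsStrictOrderedRing 𝕜] {s : Finset ι} {t w : ι → 𝕜} {C : 𝕜}
    (hw : ∀ i ∈ s, 0 ≤ w i) (hC : 0 ≤ C)
    (h : ∀ i ∈ s, 0 < w i → t i * ∑ j ∈ s, w j ≤ C) :
    ∑ i ∈ s, t i * w i ≤ C := by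
  set W := ∑ j ∈ s, w j
  rcases (sum_nonneg hw).eq_or_lt with hW | hW
  · have hw0 : ∀ i ∈ s, w i = 0 := (sum_eq_zero_iff_of_nonneg hw).mp hW.symm
    rw [sum_eq_zero fun i hi => by rw [hw0 i hi, mul_zero]]
    exact hC
  · have hterm : ∀ i ∈ s, t i * W * w i ≤ C * w i := fun i hi => by
      rcases (hw i hi).eq_or_lt with hwi | hwi
      · rw [← hwi, mul_zero, mul_zero]
      · exact mul_le_mul_of_nonneg_right (h i hi hwi) hwi.le
    have : (∑ i ∈ s, t i * w i) * W ≤ C * W :=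
      calc (∑ i ∈ s, t i * w i) * W = ∑ i ∈ s, t i * W * w i := by
            rw [sum_mul]; exact sum_congr rfl fun i _ => by ring
        _ ≤ ∑ i ∈ s, C * w i := sum_le_sum hterm
        _ = C * W := (mul_sum s w C).symm
    exact le_of_mul_le_mul_right this hW

theorem positivity_of_draining_time_update_general
    {I E : Type*} [Fintype E]
    (h : I → ℝ) (hh : ∀ i, 0 ≤ h i)
    (Δx Δt : ℝ) (hΔx : 0 < Δx)
    (Fs : I → E → ℝ)
    (ΔtE : E → ℝ)
    (hΔtE : ∀ e, 0 ≤ ΔtE e ∧ ΔtE e ≤ Δt)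
    (hdrain : ∀ e i, 0 < Fs i e →
      ΔtE e * (∑ e', max (Fs i e') 0) ≤ Δx * h i) :
    ∀ i, 0 ≤ h i - (1 / Δx) * ∑ e, ΔtE e * Fs i e := by
  intro i
  have h_le_outflow : ∑ e, ΔtE e * Fs i e ≤ ∑ e, ΔtE e * max (Fs i e) 0 :=
    sum_le_sum fun e _ => mul_le_mul_of_nonneg_left (le_max_left _ _) (hΔtE e).1
  have h_outflow_le : ∑ e, ΔtE e * max (Fs i e) 0 ≤ Δx * h i :=
    sum_mul_le_of_forall_mul_sum_le (fun e _ => le_max_right _ _)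
      (mul_nonneg hΔx.le (hh i))
      fun e _ hpos => hdrain e i ((lt_max_iff.mp hpos).resolve_right (lt_irrefl 0))
  rw [one_div, sub_nonneg, inv_mul_le_iff₀ hΔx]
  exact h_le_outflow.trans h_outflow_le

/-- Positivity of the draining-time-modified finite volume update:
cutting off the outgoing flux of each edge at the draining time of its
upwind cell guarantees nonnegative updated water heights. -/
theorem positivity_of_draining_time_update
    {I E : Type*} [Fintype I] [DecidableEq I] [Fintype E]
    (h : I → ℝ) (hh : ∀ i, 0 ≤ h i)
    (Δx Δt : ℝ) (hΔx : 0 < Δx) (hΔt : 0 < Δt)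
    (a b : E → I) (hab : ∀ e, a e ≠ b e)
    (F : E → ℝ)
    (Fs : I → E → ℝ)
    (hFs : ∀ i e, Fs i e =
      if i = a e then F e else if i = b e then -F e else 0)
    (ΔtE : E → ℝ)
    (hΔtE : ∀ e, 0 ≤ ΔtE e ∧ ΔtE e ≤ Δt)
    (hdrain : ∀ e i, 0 < Fs i e →
      ΔtE e * (∑ e', max (Fs i e') 0) ≤ Δx * h i) :
    ∀ i, 0 ≤ h i - (1 / Δx) * ∑ e, ΔtE e * Fs i e :=
  positivity_of_draining_time_update_general h hh Δx Δt hΔx Fs ΔtE hΔtE hdrain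
end

section
/- Let h ≥ 0 and Δx > 0 be real numbers, let n be a natural number, let F : Fin n → ℝ be a family of edge fluxes and Δt : Fin n → ℝ a family of edge time steps with Δt j ≥ 0 for all j. Assume that for every index j with F j > 0 one has Δt j · (Σ_k max(F k, 0)) ≤ Δx · h. Then h − (1/Δx) · Σ_j Δt j · F j ≥ 0. -/
/-! The outflow-weighted time steps `Δt j * max (F j) 0` are dominated by the convex
combination of the draining time `Δx * h / Σ_k max (F k) 0` with weights `max (F j) 0`,
so the total outflow over the step is at most the water `Δx * h` in the cell; inflow
only adds water. -/

open Finset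

theorem sum_mul_le_of_mul_sum_le {ι : Type*} {s : Finset ι} {w t : ι → ℝ} {c : ℝ}
    (hw : ∀ i ∈ s, 0 ≤ w i) (hc : 0 ≤ c)
    (ht : ∀ i ∈ s, 0 < w i → t i * ∑ k ∈ s, w k ≤ c) :
    ∑ i ∈ s, t i * w i ≤ c := by
  rcases (sum_nonneg hw).eq_or_lt with hW | hW
  · have hw_zero : ∀ i ∈ s, w i = 0 := (sum_eq_zero_iff_of_nonneg hw).mp hW.symm
    rwa [sum_eq_zero fun i hi => by rw [hw_zero i hi, mul_zero]]
  · refine le_of_mul_le_mul_right ?_ hW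
    calc (∑ i ∈ s, t i * w i) * ∑ k ∈ s, w k
        = ∑ i ∈ s, w i * (t i * ∑ k ∈ s, w k) := by
          rw [sum_mul]; exact sum_congr rfl fun _ _ => by ring
      _ ≤ ∑ i ∈ s, w i * c := sum_le_sum fun i hi => by
          rcases (hw i hi).eq_or_lt with hwi | hwi
          · simp [← hwi]
          · exact mul_le_mul_of_nonneg_left (ht i hi hwi) hwi.le
      _ = c * ∑ k ∈ s, w k := by rw [mul_sum]; exact sum_congr rfl fun _ _ => mul_comm _ _

/-- Single-cell positivity inequality: if on every outflow edge the local
time step is at most the draining time of the cell, the updated water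
height is nonnegative. -/
theorem single_cell_positivity
    (h Δx : ℝ) (hh : 0 ≤ h) (hΔx : 0 < Δx)
    (n : ℕ) (F : Fin n → ℝ) (Δt : Fin n → ℝ)
    (hΔt : ∀ j, 0 ≤ Δt j)
    (hdrain : ∀ j, 0 < F j → Δt j * (∑ k, max (F k) 0) ≤ Δx * h) :
    0 ≤ h - (1 / Δx) * ∑ j, Δt j * F j := by
  have hinflow : ∑ j, Δt j * F j ≤ ∑ j, Δt j * max (F j) 0 :=
    sum_le_sum fun j _ => mul_le_mul_of_nonneg_left (le_max_left _ _) (hΔt j)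
  have houtflow : ∑ j, Δt j * max (F j) 0 ≤ Δx * h :=
    sum_mul_le_of_mul_sum_le (fun _ _ => le_max_right _ _) (mul_nonneg hΔx.le hh)
      fun j _ hj => hdrain j (lt_max_iff.mp hj |>.resolve_right (lt_irrefl 0))
  rw [sub_nonneg, one_div, inv_mul_le_iff₀ hΔx]
  exact hinflow.trans houtflow
end

section
/- Let g > 0, h > 0, v₁, v₂, θ be real numbers, set c = √(g h), λ = v₁ cos θ + v₂ sin θ, and let A = cos θ • A₁ + sin θ • A₂ with A₁ = !![v₁, h, 0; g, v₁, 0; 0, 0, v₁] and A₂ = !![v₂, 0, h; 0, v₂, 0; g, 0, v₂]. Then the characteristic polynomial of A equals (X − C(λ − c)) · (X − C(λ)) · (X − C(λ + c)); in particular the eigenvalues of A are exactly λ − c, λ and λ + c. -/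
open Polynomial

/-!
The directional Jacobian is `λ • 1` plus a rank-two "arrowhead" perturbation whose off-diagonal
products sum to `g h (cos² θ + sin² θ) = c²`. Expanding the determinant along the first row, the
characteristic polynomial of such a matrix is `(X - λ) ((X - λ)² - c²)`, which splits as claimed.
-/

section

variable {R : Type*} [CommRing R]

theorem Matrix.charpoly_arrowhead (l p q r s : R) :
    (!![l, p, q; r, l, 0; s, 0, l] : Matrix (Fin 3) (Fin 3) R).charpoly =
      (X - C l) * ((X - C l) ^ 2 - C (p * r + q * s)) := by
  rw [Matrix.charpoly, Matrix.det_fin_three]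
  simp only [Fin.isValue, Matrix.charmatrix_apply_eq, Matrix.charmatrix_apply_ne, Matrix.of_apply,
    Matrix.cons_val', Matrix.cons_val_zero, Matrix.cons_val_one, Matrix.cons_val,
    Matrix.cons_val_fin_one, ne_eq, Fin.ext_iff, Fin.coe_ofNat_eq_mod, Nat.one_mod, Nat.zero_mod,
    Nat.mod_succ, OfNat.one_ne_ofNat, OfNat.ofNat_ne_one, OfNat.ofNat_ne_zero, OfNat.zero_ne_ofNat,
    zero_ne_one, one_ne_zero, not_false_eq_true, map_zero, map_add, map_mul, neg_zero]
  ring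

theorem Polynomial.X_sub_C_sq_sub_C_mul_self (l c : R) :
    (X - C l) ^ 2 - C (c * c) = (X - C (l - c)) * (X - C (l + c)) := by
  simp only [C_sub, C_add, C_mul]
  ring

theorem smul_add_smul_shallowWaterJacobian (a b g h v₁ v₂ : R) :
    a • !![v₁, h, 0; g, v₁, 0; 0, 0, v₁] + b • !![v₂, 0, h; 0, v₂, 0; g, 0, v₂] =
      !![v₁ * a + v₂ * b, a * h, b * h; a * g, v₁ * a + v₂ * b, 0; b * g, 0, v₁ * a + v₂ * b] := by
  ext i j
  fin_cases i <;> fin_cases j <;>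
    simp only [Matrix.smul_of, Matrix.smul_cons, smul_eq_mul, mul_zero, Matrix.smul_empty,
      Fin.zero_eta, Fin.mk_one, Fin.reduceFinMk, Fin.isValue, Matrix.add_apply, Matrix.of_apply,
      Matrix.cons_val', Matrix.cons_val_zero, Matrix.cons_val_one, Matrix.cons_val,
      Matrix.cons_val_fin_one] <;>
    ring

end

/-- The characteristic polynomial of the directional Jacobian of the
shallow water system factors with roots v·ξ − c, v·ξ, v·ξ + c. -/
theorem shallow_water_charpoly
    (g h v₁ v₂ θ : ℝ) (hg : 0 < g) (hh : 0 < h) :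
    let c := Real.sqrt (g * h)
    let lam := v₁ * Real.cos θ + v₂ * Real.sin θ
    let A₁ : Matrix (Fin 3) (Fin 3) ℝ := !![v₁, h, 0; g, v₁, 0; 0, 0, v₁]
    let A₂ : Matrix (Fin 3) (Fin 3) ℝ := !![v₂, 0, h; 0, v₂, 0; g, 0, v₂]
    let A := Real.cos θ • A₁ + Real.sin θ • A₂
    A.charpoly = (X - C (lam - c)) * (X - C lam) * (X - C (lam + c)) := by
  intro c lam A₁ A₂ A
  have hc : c * c = g * h := Real.mul_self_sqrt (by positivity)
  have hcoupling : Real.cos θ * h * (Real.cos θ * g) + Real.sin θ * h * (Real.sin θ * g) = c * c := by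
    linear_combination g * h * Real.cos_sq_add_sin_sq θ - hc
  rw [show A = _ from smul_add_smul_shallowWaterJacobian _ _ _ _ _ _,
    Matrix.charpoly_arrowhead, hcoupling, Polynomial.X_sub_C_sq_sub_C_mul_self]
  ring
end

section
/- Let g > 0, c̄ > 0, τ, H₀ and b_P be real numbers, and let H, v₁, v₂ : ℝ → ℝ be the data on the sonic circle, assumed to satisfy the lake at rest: H(θ) = H₀ and v₁(θ) = v₂(θ) = 0 for all θ, with averaged velocities v̄₁ = v̄₂ = 0. Then the first-order approximate evolution operator returns the lake at rest values: (1/(2π)) ∫₀^{2π} (H(θ) − (c̄/g)·(v₁(θ)·sign(cos θ) + v₂(θ)·sign(sin θ))) dθ − b_P + (τ/(2π)) ∫₀^{2π} (v̄₁·β₁(θ) + v̄₂·β₂(θ)) dθ = H₀ − b_P for any integrable bottom-slope data β₁, β₂, and (1/(2π)) ∫₀^{2π} (−(g/c̄)·H(θ)·sign(cos θ) + v₁(θ)·(cos²θ + 1/2) + v₂(θ)·sin θ·cos θ) dθ = 0, and (1/(2π)) ∫₀^{2π} (−(g/c̄)·H(θ)·sign(sin θ) + v₁(θ)·sin θ·cos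 θ + v₂(θ)·(sin²θ + 1/2)) dθ = 0. -/
/-!
At the lake at rest every velocity term vanishes, so the height operator reduces to the mean of the
constant `H₀`, and each velocity operator to a multiple of the mean of `sign cos` or `sign sin`
over a full period. Both means vanish: `sign ∘ sin` is odd and `sign ∘ cos` changes sign under
`θ ↦ π - θ`, and by periodicity the period can be placed symmetrically about the centre of that
reflection.
-/

open MeasureTheory Real

theorem intervalIntegral.integral_eq_zero_of_antisymm {E : Type*} [NormedAddCommGroup E]
    [NormedSpace ℝ E] {f : ℝ → E} {a b : ℝ} (h : ∀ x, f (a + b - x) = -f x) :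
    ∫ x in a..b, f x = 0 := by
  have hreflect := intervalIntegral.integral_comp_sub_left f (a + b) (a := a) (b := b)
  simp only [h, intervalIntegral.integral_neg, add_sub_cancel_right, add_sub_cancel_left]
    at hreflect
  have : IsAddTorsionFree E := .of_isTorsionFree ℝ E
  exact neg_eq_self.mp hreflect

theorem Function.Periodic.intervalIntegral_eq_zero_of_antisymm {E : Type*}
    [NormedAddCommGroup E] [NormedSpace ℝ E] {f : ℝ → E} {T c : ℝ} (hf : Function.Periodic f T)
    (h : ∀ x, f (c - x) = -f x) (t : ℝ) :
    ∫ x in t..t + T, f x = 0 := by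
  rw [hf.intervalIntegral_add_eq t ((c - T) / 2)]
  exact intervalIntegral.integral_eq_zero_of_antisymm fun x => by
    rw [show (c - T) / 2 + ((c - T) / 2 + T) - x = c - x by ring, h]

theorem Real.integral_sign_sin_two_pi : ∫ θ in (0 : ℝ)..2 * π, Real.sign (Real.sin θ) = 0 := by
  simpa using (Real.sin_periodic.comp Real.sign).intervalIntegral_eq_zero_of_antisymm (c := 0)
    (fun x => by simp [Real.sign_neg]) 0

theorem Real.integral_sign_cos_two_pi : ∫ θ in (0 : ℝ)..2 * π, Real.sign (Real.cos θ) = 0 := by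
  simpa using (Real.cos_periodic.comp Real.sign).intervalIntegral_eq_zero_of_antisymm (c := π)
    (fun x => by simp [Real.cos_pi_sub, Real.sign_neg]) 0

theorem first_order_evolution_well_balanced_general
    (g cbar τ H₀ bP : ℝ)
    (H v₁ v₂ : ℝ → ℝ)
    (hH : ∀ θ, H θ = H₀) (hv₁ : ∀ θ, v₁ θ = 0) (hv₂ : ∀ θ, v₂ θ = 0)
    (vbar₁ vbar₂ : ℝ) (hvb₁ : vbar₁ = 0) (hvb₂ : vbar₂ = 0)
    (β₁ β₂ : ℝ → ℝ) :
    ((1 / (2 * π)) * ∫ θ in (0:ℝ)..(2 * π),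
        (H θ - (cbar / g) * (v₁ θ * Real.sign (Real.cos θ)
          + v₂ θ * Real.sign (Real.sin θ))))
      - bP
      + (τ / (2 * π)) * (∫ θ in (0:ℝ)..(2 * π), (vbar₁ * β₁ θ + vbar₂ * β₂ θ))
      = H₀ - bP ∧
    (1 / (2 * π)) * ∫ θ in (0:ℝ)..(2 * π),
        (-(g / cbar) * H θ * Real.sign (Real.cos θ)
          + v₁ θ * ((Real.cos θ) ^ 2 + 1 / 2)
          + v₂ θ * Real.sin θ * Real.cos θ) = 0 ∧
    (1 / (2 * π)) * ∫ θ in (0:ℝ)..(2 * π),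
        (-(g / cbar) * H θ * Real.sign (Real.sin θ)
          + v₁ θ * Real.sin θ * Real.cos θ
          + v₂ θ * ((Real.sin θ) ^ 2 + 1 / 2)) = 0 := by
  simp only [hH, hv₁, hv₂, hvb₁, hvb₂, zero_mul, add_zero, mul_zero, sub_zero,
    intervalIntegral.integral_const, intervalIntegral.integral_zero,
    intervalIntegral.integral_const_mul, Real.integral_sign_cos_two_pi,
    Real.integral_sign_sin_two_pi, smul_eq_mul, and_true]
  field_simp

/-- The first-order approximate evolution operator of the FVEG scheme
reproduces the lake at rest state. -/
theorem first_order_evolution_well_balanced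
    (g cbar τ H₀ bP : ℝ) (hg : 0 < g) (hc : 0 < cbar)
    (H v₁ v₂ : ℝ → ℝ)
    (hH : ∀ θ, H θ = H₀) (hv₁ : ∀ θ, v₁ θ = 0) (hv₂ : ∀ θ, v₂ θ = 0)
    (vbar₁ vbar₂ : ℝ) (hvb₁ : vbar₁ = 0) (hvb₂ : vbar₂ = 0)
    (β₁ β₂ : ℝ → ℝ)
    (hβ₁ : IntervalIntegrable β₁ volume 0 (2 * π))
    (hβ₂ : IntervalIntegrable β₂ volume 0 (2 * π)) :
    ((1 / (2 * π)) * ∫ θ in (0:ℝ)..(2 * π),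
        (H θ - (cbar / g) * (v₁ θ * Real.sign (Real.cos θ)
          + v₂ θ * Real.sign (Real.sin θ))))
      - bP
      + (τ / (2 * π)) * (∫ θ in (0:ℝ)..(2 * π), (vbar₁ * β₁ θ + vbar₂ * β₂ θ))
      = H₀ - bP ∧
    (1 / (2 * π)) * ∫ θ in (0:ℝ)..(2 * π),
        (-(g / cbar) * H θ * Real.sign (Real.cos θ)
          + v₁ θ * ((Real.cos θ) ^ 2 + 1 / 2)
          + v₂ θ * Real.sin θ * Real.cos θ) = 0 ∧
    (1 / (2 * π)) * ∫ θ in (0:ℝ)..(2 * π),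
        (-(g / cbar) * H θ * Real.sign (Real.sin θ)
          + v₁ θ * Real.sin θ * Real.cos θ
          + v₂ θ * ((Real.sin θ) ^ 2 + 1 / 2)) = 0 :=
  first_order_evolution_well_balanced_general g cbar τ H₀ bP H v₁ v₂ hH hv₁ hv₂ vbar₁ vbar₂ hvb₁
    hvb₂ β₁ β₂
end
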